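/- arXiv:1405.7144 — 2 statements merged into one kernel-verified Lean document; each statement's English description precedes it below -/
import Mathlib

section
/- Let m ≥ 3 be odd and g(x) = Σ_{k=(m+1)/2}^{m} C(m,k) x^k (1−x)^{m−k}. Then g(x) ≤ x for all x ∈ [0, 1/2] and g(x) ≥ x for all x ∈ [1/2, 1]. -/
/-!
Write `m = 2t + 1` and `g = majPoly m`, a sum of Bernstein polynomials. Differentiating
telescopes the sum to `g' = m · C(2t, t) · (x(1 - x))^t`, which increases on `[0, 1/2]`, so `g`
is convex there. Since `g(x) + g(1 - x) = 1`, we get `g(1/2) = 1/2`; together with `g(0) = 0`,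
convexity puts `g` below the chord `y = x` on `[0, 1/2]`, and the symmetry transfers this to
`g ≥ x` on `[1/2, 1]`.
-/

/-- The majority polynomial: probability that `Bin(m,x) ≥ (m+1)/2`. -/
noncomputable def majPoly (m : ℕ) (x : ℝ) : ℝ :=
  ∑ k ∈ Finset.Icc ((m + 1) / 2) m, (m.choose k : ℝ) * x ^ k * (1 - x) ^ (m - k)

open Finset Polynomial

namespace bernsteinPolynomial

variable {R : Type*} [CommRing R]

theorem derivative_sum_Ioc (n j : ℕ) :
    derivative (∑ ν ∈ Ioc j n, bernsteinPolynomial R n ν) =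
      n * bernsteinPolynomial R (n - 1) j := by
  rcases le_or_gt n j with hnj | hjn
  · rcases Nat.eq_zero_or_pos n with rfl | hn
    · simp
    · simp [Ioc_eq_empty_of_le hnj, eq_zero_of_lt R (show n - 1 < j by omega)]
  · rw [← Ico_add_one_add_one_eq_Ioc, ← sum_Ico_add', derivative_sum]
    simp only [derivative_succ, ← mul_sum, ← neg_sub (bernsteinPolynomial R (n - 1) (_ + 1)),
      sum_neg_distrib]
    rw [sum_Ico_sub _ hjn.le, eq_zero_of_lt R (show n - 1 < n by omega), zero_sub, neg_neg]

theorem sum_Ioc_comp_one_sub (n j : ℕ) :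
    (∑ ν ∈ Ioc j n, bernsteinPolynomial R n ν).comp (1 - X) =
      ∑ ν ∈ range (n - j), bernsteinPolynomial R n ν := by
  rw [← Ico_add_one_add_one_eq_Ioc, Polynomial.sum_comp,
    sum_congr rfl fun ν hν ↦ flip R n ν (by simp at hν; omega), sum_Ico_reflect _ _ le_rfl]
  simp

theorem sum_range_add_sum_Ioc {n j : ℕ} (h : j ≤ n) :
    ∑ ν ∈ range (j + 1), bernsteinPolynomial R n ν + ∑ ν ∈ Ioc j n, bernsteinPolynomial R n ν =
      1 := by
  rw [← Ico_add_one_add_one_eq_Ioc, sum_range_add_sum_Ico _ (by omega), sum]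

end bernsteinPolynomial

open bernsteinPolynomial

theorem majPoly_two_mul_add_one (t : ℕ) :
    majPoly (2 * t + 1) =
      fun x ↦ (∑ ν ∈ Ioc t (2 * t + 1), bernsteinPolynomial ℝ (2 * t + 1) ν).eval x := by
  ext x
  rw [majPoly, show (2 * t + 1 + 1) / 2 = t + 1 by omega, Icc_add_one_left_eq_Ioc, eval_finsetSum]
  simp [bernsteinPolynomial]

theorem majPoly_add_majPoly_one_sub (t : ℕ) (x : ℝ) :
    majPoly (2 * t + 1) x + majPoly (2 * t + 1) (1 - x) = 1 := by
  have h := congrArg (eval x) (sum_range_add_sum_Ioc (R := ℝ) (show t ≤ 2 * t + 1 by omega))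
  rw [← show 2 * t + 1 - t = t + 1 by omega, ← sum_Ioc_comp_one_sub, eval_add, eval_comp,
    eval_sub, eval_one, eval_X] at h
  simp only [majPoly_two_mul_add_one]
  linarith

theorem majPoly_zero (t : ℕ) : majPoly (2 * t + 1) 0 = 0 := by
  simp [majPoly_two_mul_add_one, eval_finsetSum, eval_at_0]

theorem majPoly_half (t : ℕ) : majPoly (2 * t + 1) (1 / 2) = 1 / 2 := by
  linarith [majPoly_add_majPoly_one_sub t (1 / 2), show (1 : ℝ) - 1 / 2 = 1 / 2 by norm_num]

theorem deriv_majPoly (t : ℕ) (x : ℝ) :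
    deriv (majPoly (2 * t + 1)) x = (2 * t + 1) * (2 * t).choose t * (x * (1 - x)) ^ t := by
  rw [majPoly_two_mul_add_one, Polynomial.deriv, derivative_sum_Ioc]
  simp only [bernsteinPolynomial, add_tsub_cancel_right, show 2 * t - t = t by omega, eval_mul,
    eval_natCast, eval_pow, eval_X, eval_sub, eval_one, mul_pow]
  push_cast
  ring

theorem convexOn_majPoly (t : ℕ) : ConvexOn ℝ (Set.Icc 0 (1 / 2)) (majPoly (2 * t + 1)) := by
  have hdiff : Differentiable ℝ (majPoly (2 * t + 1)) := by
    rw [majPoly_two_mul_add_one]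
    exact Polynomial.differentiable _
  refine MonotoneOn.convexOn_of_deriv (convex_Icc _ _) hdiff.continuous.continuousOn
    hdiff.differentiableOn ?_
  rw [interior_Icc]
  intro a ha b hb hab
  simp only [deriv_majPoly]
  have : a * (1 - a) ≤ b * (1 - b) := by nlinarith [ha.1, hb.2]
  gcongr
  nlinarith [ha.1, ha.2]

theorem majPoly_le_self (t : ℕ) {x : ℝ} (hx : x ∈ Set.Icc (0 : ℝ) (1 / 2)) :
    majPoly (2 * t + 1) x ≤ x := by
  have h := (convexOn_majPoly t).2 (Set.left_mem_Icc.2 (by norm_num))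
    (Set.right_mem_Icc.2 (by norm_num)) (show 0 ≤ 1 - 2 * x by linarith [hx.2])
    (show 0 ≤ 2 * x by linarith [hx.1]) (by ring)
  simp only [smul_eq_mul, majPoly_zero, majPoly_half] at h
  rwa [show (1 - 2 * x) * 0 + 2 * x * (1 / 2) = x by ring] at h

theorem majPoly_le_id_on_lower_half_general (m : ℕ) (hm : Odd m) :
    (∀ x ∈ Set.Icc (0:ℝ) (1/2), majPoly m x ≤ x) ∧
    (∀ x ∈ Set.Icc (1/2 : ℝ) 1, x ≤ majPoly m x) := by
  obtain ⟨t, rfl⟩ := hm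
  refine ⟨fun x hx ↦ majPoly_le_self t hx, fun x hx ↦ ?_⟩
  have := majPoly_le_self t (x := 1 - x) ⟨by linarith [hx.2], by linarith [hx.1]⟩
  linarith [majPoly_add_majPoly_one_sub t x]

theorem majPoly_le_id_on_lower_half (m : ℕ) (hm : Odd m) (hm3 : 3 ≤ m) :
    (∀ x ∈ Set.Icc (0:ℝ) (1/2), majPoly m x ≤ x) ∧
    (∀ x ∈ Set.Icc (1/2 : ℝ) 1, x ≤ majPoly m x) :=
  majPoly_le_id_on_lower_half_general m hm
end

section
/- Let m ≥ 3 be odd and let L : ℝ → (−1/2, 1/2) be defined by L(α) = lim_{n→∞} h^{(n)}(α γ^{−n}) as above. Then L is 1-Lipschitz: |L(α) − L(α')| ≤ |α − α'| for all α, α' ∈ ℝ. -/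
/-! Writing `m = 2p + 1`, the derivative of the majority polynomial is a telescoping sum of
derivatives of Bernstein polynomials, which gives `h'(x) = m C(2p, p) (1/4 - x²)^p`.
So `|h'| ≤ h'(0) = γ` on `[-1/2, 1/2]`, an interval that `h` maps into itself, and by the mean
value theorem `h^[n]` is `γⁿ`-Lipschitz there. Since `γ > 1`, the points `α γ⁻ⁿ` and `α' γ⁻ⁿ`
eventually lie in the interval, where `|h^[n](α γ⁻ⁿ) - h^[n](α' γ⁻ⁿ)| ≤ γⁿ |α - α'| γ⁻ⁿ`;
letting `n → ∞` gives the claim. -/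

open Finset Filter Polynomial Set Topology
open scoped NNReal

/-- `h(x) = g(1/2 + x) − 1/2`, the recentered majority polynomial. -/
noncomputable def majH (m : ℕ) (x : ℝ) : ℝ := majPoly m (1/2 + x) - 1/2

/-- `γ(m) = m · C(m−1,(m−1)/2) · 2^{−(m−1)}`. -/
noncomputable def gammaMaj (m : ℕ) : ℝ :=
  (m : ℝ) * ((m - 1).choose ((m - 1) / 2) : ℝ) / 2 ^ (m - 1)

theorem bernsteinPolynomial.derivative_sum_Icc {R : Type*} [CommRing R] {n ν : ℕ} (h : ν ≤ n) :
    derivative (∑ k ∈ Icc (ν + 1) (n + 1), bernsteinPolynomial R (n + 1) k) =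
      (n + 1) * bernsteinPolynomial R n ν := by
  have htelescope : ∑ k ∈ Icc ν n,
      (bernsteinPolynomial R n k - bernsteinPolynomial R n (k + 1)) =
      bernsteinPolynomial R n ν := by
    rw [sum_sub_distrib, ← neg_sub, ← sum_sub_distrib, sum_Icc_sub h,
      bernsteinPolynomial.eq_zero_of_lt R (Nat.lt_succ_self n)]
    ring
  rw [← map_add_right_Icc, sum_map, derivative_sum]
  simp only [addRightEmbedding_apply, bernsteinPolynomial.derivative_succ_aux, ← mul_sum,
    htelescope]

theorem majPoly_eq_eval (m : ℕ) (x : ℝ) :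
    majPoly m x = (∑ k ∈ Icc ((m + 1) / 2) m, bernsteinPolynomial ℝ m k).eval x := by
  simp [majPoly, eval_finsetSum, bernsteinPolynomial]

theorem majPoly_mem_Icc (m : ℕ) {x : ℝ} (hx : x ∈ Icc (0 : ℝ) 1) :
    majPoly m x ∈ Icc (0 : ℝ) 1 := by
  have hterm : ∀ k, 0 ≤ (bernsteinPolynomial ℝ m k).eval x := fun k => by
    simp only [bernsteinPolynomial, eval_mul, eval_pow, eval_sub, eval_one, eval_X, eval_natCast]
    exact mul_nonneg (mul_nonneg (Nat.cast_nonneg _) (pow_nonneg hx.1 _))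
      (pow_nonneg (sub_nonneg.2 hx.2) _)
  rw [majPoly_eq_eval, eval_finsetSum]
  refine ⟨sum_nonneg fun k _ => hterm k, ?_⟩
  calc ∑ k ∈ Icc ((m + 1) / 2) m, (bernsteinPolynomial ℝ m k).eval x
      ≤ ∑ k ∈ range (m + 1), (bernsteinPolynomial ℝ m k).eval x :=
        sum_le_sum_of_subset_of_nonneg
          (fun k hk => by simp only [Finset.mem_Icc, Finset.mem_range] at hk ⊢; omega) fun k _ _ => hterm k
    _ = 1 := by rw [← eval_finsetSum, bernsteinPolynomial.sum, eval_one]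

theorem mapsTo_majH (m : ℕ) : MapsTo (majH m) (Icc (-(1/2)) (1/2)) (Icc (-(1/2)) (1/2)) :=
  fun x hx => by
    obtain ⟨h0, h1⟩ := majPoly_mem_Icc m (x := 1/2 + x) ⟨by linarith [hx.1], by linarith [hx.2]⟩
    exact ⟨by unfold majH; linarith, by unfold majH; linarith⟩

theorem hasDerivAt_majH (p : ℕ) (x : ℝ) :
    HasDerivAt (majH (2 * p + 1)) ((2 * p + 1) * p.centralBinom * (1/4 - x ^ 2) ^ p) x := by
  set P := ∑ k ∈ Icc (p + 1) (2 * p + 1), bernsteinPolynomial ℝ (2 * p + 1) k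
  have hmajH : majH (2 * p + 1) = fun y => P.eval (1/2 + y) - 1/2 := by
    have hmid : (2 * p + 1 + 1) / 2 = p + 1 := by omega
    ext y
    rw [majH, majPoly_eq_eval, hmid]
  have hP : derivative P = (2 * p + 1) * bernsteinPolynomial ℝ (2 * p) p := by
    simpa [P] using bernsteinPolynomial.derivative_sum_Icc (R := ℝ) (n := 2 * p) (ν := p) (by omega)
  rw [hmajH]
  refine (((P.hasDerivAt (1/2 + x)).comp_const_add (1/2) x).sub_const (1/2)).congr_deriv ?_
  rw [hP, eval_mul, bernsteinPolynomial, Nat.centralBinom]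
  simp only [eval_mul, eval_pow, eval_sub, eval_one, eval_X, eval_natCast, eval_add, two_mul,
    Nat.add_sub_cancel, mul_assoc, ← mul_pow]
  ring_nf

theorem gammaMaj_nonneg (m : ℕ) : 0 ≤ gammaMaj m := by
  unfold gammaMaj
  positivity

theorem gammaMaj_eq (p : ℕ) : gammaMaj (2 * p + 1) = (2 * p + 1) * p.centralBinom / 4 ^ p := by
  have hhalf : 2 * p / 2 = p := by omega
  rw [gammaMaj, Nat.add_sub_cancel, hhalf, pow_mul, Nat.centralBinom]
  norm_num

theorem one_lt_gammaMaj {p : ℕ} (hp : 0 < p) : 1 < gammaMaj (2 * p + 1) := by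
  have hcentral : (4 : ℝ) ^ p ≤ 2 * p * p.centralBinom := by
    exact_mod_cast Nat.four_pow_le_two_mul_self_mul_centralBinom p hp
  have hpos : (0 : ℝ) < p.centralBinom := by exact_mod_cast p.centralBinom_pos
  rw [gammaMaj_eq, one_lt_div (by positivity)]
  linarith

theorem lipschitzOnWith_majH (p : ℕ) :
    LipschitzOnWith (gammaMaj (2 * p + 1)).toNNReal (majH (2 * p + 1)) (Icc (-(1/2)) (1/2)) := by
  refine (convex_Icc _ _).lipschitzOnWith_of_nnnorm_hasDerivWithin_le
    (fun x _ => (hasDerivAt_majH p x).hasDerivWithinAt) fun x hx => ?_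
  rw [← NNReal.coe_le_coe, coe_nnnorm, Real.coe_toNNReal _ (gammaMaj_nonneg _), gammaMaj_eq,
    Real.norm_eq_abs]
  have hsq : 0 ≤ 1/4 - x ^ 2 := by nlinarith [hx.1, hx.2]
  calc |(2 * p + 1) * p.centralBinom * (1/4 - x ^ 2) ^ p|
      = (2 * p + 1) * p.centralBinom * (1/4 - x ^ 2) ^ p := abs_of_nonneg (by positivity)
    _ ≤ (2 * p + 1) * p.centralBinom * (1/4) ^ p := by gcongr; nlinarith
    _ = (2 * p + 1) * p.centralBinom / 4 ^ p := by rw [one_div_pow, mul_one_div]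

theorem LipschitzOnWith.iterate {α : Type*} [PseudoEMetricSpace α] {f : α → α} {s : Set α}
    {K : ℝ≥0} (hf : LipschitzOnWith K f s) (hmaps : MapsTo f s s) :
    ∀ n, LipschitzOnWith (K ^ n) f^[n] s
  | 0 => by simpa using LipschitzWith.id.lipschitzOnWith
  | n + 1 => by
    rw [pow_succ, Function.iterate_succ]
    exact (hf.iterate hmaps n).comp hf hmaps

theorem lipschitzWith_one_of_tendsto_iterate_div_pow {f L : ℝ → ℝ} {s : Set ℝ} {K : ℝ≥0}
    (hK : 1 < K) (hs : s ∈ 𝓝 0) (hf : LipschitzOnWith K f s) (hmaps : MapsTo f s s)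
    (hL : ∀ α, Tendsto (fun n : ℕ => f^[n] (α / (K : ℝ) ^ n)) atTop (𝓝 (L α))) :
    LipschitzWith 1 L := by
  refine LipschitzWith.mk_one fun α α' => ?_
  have hKpow : Tendsto (fun n : ℕ => (K : ℝ) ^ n) atTop atTop :=
    tendsto_pow_atTop_atTop_of_one_lt (by exact_mod_cast hK)
  have hmem : ∀ α, ∀ᶠ n : ℕ in atTop, α / (K : ℝ) ^ n ∈ s := fun α =>
    (tendsto_const_nhds.div_atTop hKpow).eventually_mem hs
  refine le_of_tendsto ((hL α).dist (hL α')) ?_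
  filter_upwards [hmem α, hmem α'] with n hα hα'
  have hKn : (0 : ℝ) < (K : ℝ) ^ n := pow_pos (by positivity) n
  calc dist (f^[n] (α / (K : ℝ) ^ n)) (f^[n] (α' / (K : ℝ) ^ n))
      ≤ (K : ℝ) ^ n * dist (α / (K : ℝ) ^ n) (α' / (K : ℝ) ^ n) := by
        exact_mod_cast (hf.iterate hmaps n).dist_le_mul _ hα _ hα'
    _ = dist α α' := by
        rw [Real.dist_eq, Real.dist_eq, ← sub_div, abs_div, abs_of_pos hKn]
        field_simp

theorem majH_limit_lipschitz_general (m : ℕ) (hm : Odd m) (hm3 : 3 ≤ m) (L : ℝ → ℝ)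
    (hL : ∀ α : ℝ, Filter.Tendsto (fun n : ℕ => (majH m)^[n] (α / gammaMaj m ^ n))
      Filter.atTop (nhds (L α))) :
    ∀ α α' : ℝ, |L α - L α'| ≤ |α - α'| := by
  obtain ⟨p, rfl⟩ := hm
  have hLip : LipschitzWith 1 L :=
    lipschitzWith_one_of_tendsto_iterate_div_pow
      (Real.one_lt_toNNReal.2 (one_lt_gammaMaj (by omega))) (Icc_mem_nhds (by norm_num) (by norm_num))
      (lipschitzOnWith_majH p) (mapsTo_majH _)
      (by simpa only [Real.coe_toNNReal _ (gammaMaj_nonneg _)] using hL)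
  intro α α'
  simpa [Real.dist_eq] using hLip.dist_le_mul α α'

theorem majH_limit_lipschitz (m : ℕ) (hm : Odd m) (hm3 : 3 ≤ m) (L : ℝ → ℝ)
    (hrange : ∀ α : ℝ, L α ∈ Set.Ioo (-(1/2) : ℝ) (1/2))
    (hL : ∀ α : ℝ, Filter.Tendsto (fun n : ℕ => (majH m)^[n] (α / gammaMaj m ^ n))
      Filter.atTop (nhds (L α))) :
    ∀ α α' : ℝ, |L α - L α'| ≤ |α - α'| :=
  majH_limit_lipschitz_general m hm hm3 L hL
end
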